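/- For t > 0 define c_t = cosh(πt/4) + cosh(3πt/4) − coth(πt)·(sinh(πt/4) + sinh(3πt/4)). Then the function t ↦ c_t is strictly decreasing on (0,∞). -/

import Mathlib

open Real Filter Set Topology

/-- `c t = cosh(πt/4) + cosh(3πt/4) − coth(πt)·(sinh(πt/4) + sinh(3πt/4))`. -/
noncomputable def c (t : ℝ) : ℝ :=
  Real.cosh (π * t / 4) + Real.cosh (3 * π * t / 4) -
    (Real.cosh (π * t) / Real.sinh (π * t)) * (Real.sinh (π * t / 4) + Real.sinh (3 * π * t / 4))

/-! With `a = πt/4`, the sum-to-product formulas give `cosh a + cosh 3a = 2 cosh 2a cosh a` and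
`sinh a + sinh 3a = 2 sinh 2a cosh a`, while `sinh 4a = 2 sinh 2a cosh 2a`; hence
`c t = cosh a / cosh 2a = x / (2x² - 1)` with `x = cosh a`. This is strictly decreasing in
`x ≥ 1`, and `cosh` is strictly increasing on `[0, ∞)`. -/

lemma Real.sinh_sub_add_sinh_add (x y : ℝ) : sinh (x - y) + sinh (x + y) = 2 * sinh x * cosh y := by
  rw [sinh_sub, sinh_add]; ring

lemma Real.cosh_sub_add_cosh_add (x y : ℝ) : cosh (x - y) + cosh (x + y) = 2 * cosh x * cosh y := by
  rw [cosh_sub, cosh_add]; ring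

lemma Real.cosh_two_mul_eq_two_mul_cosh_sq_sub_one (x : ℝ) : cosh (2 * x) = 2 * cosh x ^ 2 - 1 := by
  rw [cosh_two_mul, sinh_sq]; ring

lemma cosh_add_cosh_three_mul_sub_coth_mul {a : ℝ} (ha : a ≠ 0) :
    cosh a + cosh (3 * a) - cosh (4 * a) / sinh (4 * a) * (sinh a + sinh (3 * a)) =
      cosh a / cosh (2 * a) := by
  have hcosh : cosh a + cosh (3 * a) = 2 * cosh (2 * a) * cosh a := by
    rw [← cosh_sub_add_cosh_add]; ring_nf
  have hsinh : sinh a + sinh (3 * a) = 2 * sinh (2 * a) * cosh a := by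
    rw [← sinh_sub_add_sinh_add]; ring_nf
  have hs : sinh (2 * a) ≠ 0 := sinh_ne_zero.mpr (by positivity)
  have hc : cosh (2 * a) ≠ 0 := (cosh_pos _).ne'
  rw [hcosh, hsinh, show 4 * a = 2 * (2 * a) by ring, sinh_two_mul,
    cosh_two_mul_eq_two_mul_cosh_sq_sub_one (2 * a)]
  field_simp
  ring

lemma c_eq_cosh_div_cosh {t : ℝ} (ht : t ≠ 0) :
    c t = cosh (π * t / 4) / cosh (2 * (π * t / 4)) := by
  rw [c, ← cosh_add_cosh_three_mul_sub_coth_mul (by positivity)]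
  ring_nf

lemma strictAntiOn_div_two_mul_sq_sub_one :
    StrictAntiOn (fun x : ℝ => x / (2 * x ^ 2 - 1)) (Ici 1) := by
  intro x (hx : 1 ≤ x) y (hy : 1 ≤ y) hxy
  rw [div_lt_div_iff₀ (by nlinarith) (by nlinarith)]
  nlinarith [mul_pos (sub_pos.mpr hxy) (by nlinarith : 0 < 2 * x * y + 1)]

lemma strictAntiOn_cosh_div_cosh_two_mul :
    StrictAntiOn (fun a => cosh a / cosh (2 * a)) (Ici 0) := by
  simp only [cosh_two_mul_eq_two_mul_cosh_sq_sub_one]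
  exact strictAntiOn_div_two_mul_sq_sub_one.comp_strictMonoOn cosh_strictMonoOn
    fun a _ => one_le_cosh a

theorem stmt6 : StrictAntiOn c (Set.Ioi 0) := by
  intro s (hs : 0 < s) t (ht : 0 < t) hst
  rw [c_eq_cosh_div_cosh hs.ne', c_eq_cosh_div_cosh ht.ne']
  exact strictAntiOn_cosh_div_cosh_two_mul (mem_Ici.mpr (by positivity)) (mem_Ici.mpr (by positivity))
    (by gcongr)
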